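/- arXiv:quant-ph/0606116 — 2 statements merged into one kernel-verified Lean document; each statement's English description precedes it below -/
import Mathlib

section
/- Welch bound: Let v₁, …, v_m be unit vectors in ℂ^d with m > d. Then max_{x ≠ y} |⟨v_x, v_y⟩|² ≥ (m − d)/(d(m − 1)). -/
open Matrix in
/-- Welch bound: for `m > d` unit vectors in `ℂ^d`, some pair of distinct indices has
`|⟨v_x, v_y⟩|² ≥ (m − d)/(d(m − 1))`. -/
theorem welch_bound (d m : ℕ) (hm : d < m) (v : Fin m → EuclideanSpace ℂ (Fin d))
    (hv : ∀ x, ‖v x‖ = 1) :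
    ∃ x y : Fin m, x ≠ y ∧
      ((m : ℝ) - d) / (d * ((m : ℝ) - 1)) ≤ ‖(inner ℂ (v x) (v y) : ℂ)‖ ^ 2 := by
  rcases Nat.eq_zero_or_pos d with hd | hd
  · exfalso
    subst hd
    have h1 := hv ⟨0, hm⟩
    have : v ⟨0, hm⟩ = 0 := Subsingleton.elim _ _
    rw [this, norm_zero] at h1
    exact zero_ne_one h1
  set M : Matrix (Fin d) (Fin m) ℂ := Matrix.of fun i x => v x i with hM
  set G : Matrix (Fin m) (Fin m) ℂ := Mᴴ * M with hG
  set X : Matrix (Fin d) (Fin d) ℂ := M * Mᴴ with hX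
  have hGinner : ∀ x y, G x y = inner ℂ (v x) (v y) := by
    intro x y
    simp [hG, hM, Matrix.mul_apply, Matrix.conjTranspose_apply, PiLp.inner_apply,
      RCLike.inner_apply, mul_comm]
  have hGdiag : ∀ x, G x x = 1 := by
    intro x
    rw [hGinner, inner_self_eq_norm_sq_to_K, hv]
    norm_num
  have hGH : G.IsHermitian := Matrix.isHermitian_conjTranspose_mul_self M
  have hXH : X.IsHermitian := Matrix.isHermitian_mul_conjTranspose_self M
  have htr : X.trace = G.trace := Matrix.trace_mul_comm M Mᴴ
  have htrG : G.trace = (m : ℂ) := by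
    simp [Matrix.trace, Matrix.diag, hGdiag]
  have htr2 : (X * X).trace = (G * G).trace := by
    have e1 : X * X = M * (Mᴴ * M * Mᴴ) := by rw [hX, Matrix.mul_assoc, ← Matrix.mul_assoc Mᴴ M Mᴴ]
    have e2 : G * G = (Mᴴ * M * Mᴴ) * M := by rw [hG, ← Matrix.mul_assoc]
    rw [e1, e2, Matrix.trace_mul_comm]
  have hsum2 : ∀ {n : ℕ} (A : Matrix (Fin n) (Fin n) ℂ), A.IsHermitian →
      (A * A).trace = ((∑ i, ∑ j, Complex.normSq (A i j) : ℝ) : ℂ) := by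
    intro n A hA
    push_cast
    rw [Matrix.trace]
    simp only [Matrix.diag, Matrix.mul_apply]
    refine Finset.sum_congr rfl fun i _ => Finset.sum_congr rfl fun j _ => ?_
    have h : A j i = (starRingEnd ℂ) (A i j) := by
      have h2 := congrArg star (hA.apply i j)
      rw [star_star] at h2
      exact h2
    rw [h, Complex.mul_conj]
  have hXsum := hsum2 X hXH
  have hGsum := hsum2 G hGH
  set SX : ℝ := ∑ i, ∑ j, Complex.normSq (X i j) with hSX
  set SG : ℝ := ∑ x, ∑ y, Complex.normSq (G x y) with hSG
  have hSXG : SX = SG := by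
    have : ((SX : ℝ) : ℂ) = ((SG : ℝ) : ℂ) := by rw [← hXsum, ← hGsum, htr2]
    exact_mod_cast this
  have hXdiag : ∀ i, X i i = ((∑ x, Complex.normSq (v x i) : ℝ) : ℂ) := by
    intro i
    push_cast
    rw [hX, Matrix.mul_apply]
    refine Finset.sum_congr rfl fun x _ => ?_
    rw [← Complex.mul_conj]
    rfl
  have hXdre : ∑ i, (X i i).re = (m : ℝ) := by
    have h1 : (∑ i, X i i : ℂ) = (m : ℂ) := by
      rw [← htrG, ← htr]; simp [Matrix.trace, Matrix.diag]
    have h2 := congrArg Complex.re h1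
    rw [Complex.re_sum] at h2
    simpa using h2
  have hCS : (m : ℝ)^2 ≤ d * ∑ i, Complex.normSq (X i i) := by
    have h1 : (∑ i : Fin d, (X i i).re)^2 ≤ ((Finset.univ : Finset (Fin d)).card : ℝ) * ∑ i, ((X i i).re)^2 :=
      sq_sum_le_card_mul_sum_sq
    have h2 : ∀ i, ((X i i).re)^2 = Complex.normSq (X i i) := by
      intro i
      rw [hXdiag]
      simp [Complex.normSq_apply]
      ring
    rw [hXdre] at h1
    simpa [h2, Finset.card_univ] using h1
  have hdiagle : ∑ i, Complex.normSq (X i i) ≤ SX := by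
    rw [hSX]
    exact Finset.sum_le_sum fun i _ =>
      Finset.single_le_sum (fun j _ => Complex.normSq_nonneg _) (Finset.mem_univ i)
  have hkey : (m : ℝ)^2 ≤ d * SG := by
    rw [← hSXG]
    exact hCS.trans (mul_le_mul_of_nonneg_left hdiagle (by positivity))
  -- existence by contradiction
  haveI : Nonempty (Fin m) := ⟨⟨0, by omega⟩⟩
  set c : ℝ := ((m : ℝ) - d) / (d * ((m : ℝ) - 1)) with hc
  by_contra hcon
  push_neg at hcon
  have hfc : ∀ x y : Fin m, x ≠ y → Complex.normSq (G x y) < c := by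
    intro x y hxy
    rw [hGinner, ← Complex.sq_norm]
    exact hcon x y hxy
  have hm2 : (2 : ℝ) ≤ (m : ℝ) := by
    have : 2 ≤ m := by omega
    exact_mod_cast this
  have hd1 : (1 : ℝ) ≤ (d : ℝ) := by exact_mod_cast hd
  have hmcard : ((Finset.univ : Finset (Fin m)).card : ℝ) = m := by simp
  have hSGlt : SG < (m : ℝ) * (1 + ((m : ℝ) - 1) * c) := by
    rw [hSG]
    have hrow : ∀ x : Fin m, ∑ y, Complex.normSq (G x y) < 1 + ((m : ℝ) - 1) * c := by
      intro x
      rw [← Finset.add_sum_erase Finset.univ _ (Finset.mem_univ x), hGdiag]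
      simp only [Complex.normSq_one]
      have hne : (Finset.univ.erase x).Nonempty := by
        rw [← Finset.card_pos, Finset.card_erase_of_mem (Finset.mem_univ x), Finset.card_univ]
        simp only [Fintype.card_fin]
        omega
      have hlt : ∑ y ∈ Finset.univ.erase x, Complex.normSq (G x y)
          < ∑ y ∈ Finset.univ.erase x, c := by
        refine Finset.sum_lt_sum_of_nonempty hne fun y hy => ?_
        exact hfc x y (Finset.ne_of_mem_erase hy).symm
      have hcard : ((Finset.univ.erase x).card : ℝ) = (m : ℝ) - 1 := by
        rw [Finset.card_erase_of_mem (Finset.mem_univ x), Finset.card_univ, Fintype.card_fin,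
          Nat.cast_sub (by omega)]
        simp
      rw [Finset.sum_const, nsmul_eq_mul, hcard] at hlt
      linarith
    calc ∑ x, ∑ y, Complex.normSq (G x y)
        < ∑ _x : Fin m, (1 + ((m : ℝ) - 1) * c) :=
          Finset.sum_lt_sum_of_nonempty (Finset.univ_nonempty) fun x _ => hrow x
      _ = (m : ℝ) * (1 + ((m : ℝ) - 1) * c) := by
          rw [Finset.sum_const, nsmul_eq_mul, hmcard]
  have heq : (d : ℝ) * ((m : ℝ) * (1 + ((m : ℝ) - 1) * c)) = (m : ℝ)^2 := by
    rw [hc]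
    have hd0 : (d : ℝ) ≠ 0 := by linarith
    have hm1 : (m : ℝ) - 1 ≠ 0 := by linarith
    field_simp
    ring
  have : (d : ℝ) * SG < (m : ℝ)^2 := by
    calc (d : ℝ) * SG < (d : ℝ) * ((m : ℝ) * (1 + ((m : ℝ) - 1) * c)) := by
          exact mul_lt_mul_of_pos_left hSGlt (by linarith)
      _ = (m : ℝ)^2 := heq
  linarith
end

section
/- Suppose m > N_s² and λ₁,…,λ_{N_s} are positive with Σ λ_i² = 1. There is no family of n×n unitary pairs (U_x, V_x), x ∈ {1,…,m}, with U_x K V_xᵀ constant in x (K = Σ λ_i |i⟩⟨i|), such that tr(V_y K K† V_x†) = 0 for all x ≠ y. -/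
open Matrix

private theorem sum_restrict_aux (n Ns : ℕ) (h : Ns ≤ n) (g : Fin n → ℂ)
    (hg : ∀ i : Fin n, Ns ≤ (i:ℕ) → g i = 0) :
    ∑ i, g i = ∑ i : Fin Ns, g (Fin.castLE h i) := by
  classical
  rw [← Finset.sum_subset (Finset.filter_subset (fun i : Fin n => (i:ℕ) < Ns) Finset.univ)]
  · refine Finset.sum_bij' (fun (i : Fin n) hi => (⟨(i:ℕ), (Finset.mem_filter.mp hi).2⟩ : Fin Ns))
      (fun (j : Fin Ns) _ => Fin.castLE h j) ?_ ?_ ?_ ?_ ?_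
    · intros; exact Finset.mem_univ _
    · intro j _; simp
    · intro i hi; rfl
    · intro j hj; rfl
    · intro i hi; rfl
  · intro i _ hi
    exact hg i (le_of_not_gt (by simpa using hi))


/-- Perfect quantum fingerprinting with one-sided error is impossible when `m > N_s²`:
there is no family of unitary pairs `(U_x, V_x)` with `U_x K V_xᵀ` constant in `x`
(`K = Σ_i λ_i |i⟩⟨i|`) such that `tr(V_y K Kᴴ V_xᴴ) = 0` for all `x ≠ y`. -/
theorem no_perfect_fingerprinting (n Ns m : ℕ) (hNs : Ns ≤ n) (hm : Ns ^ 2 < m)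
    (l : Fin n → ℝ) (hpos : ∀ i : Fin n, (i : ℕ) < Ns → 0 < l i)
    (hzero : ∀ i : Fin n, Ns ≤ (i : ℕ) → l i = 0) (hsum : ∑ i, l i ^ 2 = 1)
    (K : Matrix (Fin n) (Fin n) ℂ)
    (hK : K = Matrix.of (fun i j : Fin n => if i = j then (l i : ℂ) else 0))
    (U V : Fin m → Matrix (Fin n) (Fin n) ℂ)
    (hU : ∀ x, U x ∈ Matrix.unitaryGroup (Fin n) ℂ)
    (hV : ∀ x, V x ∈ Matrix.unitaryGroup (Fin n) ℂ)
    (S : Matrix (Fin n) (Fin n) ℂ)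
    (hS : ∀ x, U x * K * (V x)ᵀ = S)
    (horth : ∀ x y : Fin m, x ≠ y → (V y * K * Kᴴ * (V x)ᴴ).trace = 0) :
    False := by
  classical
  have hm0 : 0 < m := lt_of_le_of_lt (Nat.zero_le _) hm
  set x0 : Fin m := ⟨0, hm0⟩ with hx0
  have hUstar : ∀ x, (U x)ᴴ * U x = 1 := fun x => (hU x).1
  have hVstar : ∀ x, (V x)ᴴ * V x = 1 := fun x => (hV x).1
  have hVstar' : ∀ x, V x * (V x)ᴴ = 1 := fun x => (hV x).2
  have hKT : Kᵀ = K := by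
    subst hK; ext i j; simp only [Matrix.transpose_apply, Matrix.of_apply]
    split_ifs with h1 h2 h3
    · subst h1; rfl
    · exact absurd h1.symm h2
    · exact absurd h3.symm h1
    · rfl
  have hKmul : ∀ (M : Matrix (Fin n) (Fin n) ℂ) (i j : Fin n),
      (K * M) i j = (l i : ℂ) * M i j := by
    intro M i j
    simp [Matrix.mul_apply, hK, ite_mul, Finset.sum_ite_eq]
  have hmulK : ∀ (M : Matrix (Fin n) (Fin n) ℂ) (i j : Fin n),
      (M * K) i j = M i j * (l j : ℂ) := by
    intro M i j
    simp only [Matrix.mul_apply, hK, Matrix.of_apply, mul_ite, mul_zero]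
    rw [Finset.sum_eq_single j]
    · simp
    · intro k _ hk; simp [hk]
    · simp
  set A : Fin m → Matrix (Fin n) (Fin n) ℂ := fun x => V x * K with hA
  have hST : ∀ x, Sᵀ = V x * K * (U x)ᵀ := by
    intro x
    rw [← hS x, Matrix.transpose_mul, Matrix.transpose_mul, Matrix.transpose_transpose, hKT,
      Matrix.mul_assoc]
  have hASt : ∀ x, A x = Sᵀ * ((U x)ᴴ)ᵀ := by
    intro x
    rw [hST x, Matrix.mul_assoc, Matrix.mul_assoc, ← Matrix.transpose_mul, hUstar x,
      Matrix.transpose_one, Matrix.mul_one]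
  set C : Fin m → Matrix (Fin n) (Fin n) ℂ := fun x => K * (U x0)ᵀ * ((U x)ᴴ)ᵀ with hC
  have hVC : ∀ x, V x0 * C x = A x := by
    intro x
    rw [hC, hASt x, hST x0]
    simp only [← Matrix.mul_assoc]
  have hCA : ∀ x, C x = (V x0)ᴴ * A x := by
    intro x
    rw [← hVC x, ← Matrix.mul_assoc, hVstar x0, Matrix.one_mul]
  have hAcol : ∀ x (i j : Fin n), Ns ≤ (j:ℕ) → A x i j = 0 := by
    intro x i j hj
    show (V x * K) i j = 0
    rw [hmulK, hzero j hj]; simp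
  have hCrow : ∀ x (i j : Fin n), Ns ≤ (i:ℕ) → C x i j = 0 := by
    intro x i j hi
    show (K * (U x0)ᵀ * ((U x)ᴴ)ᵀ) i j = 0
    rw [Matrix.mul_assoc, hKmul, hzero i hi]; simp
  have hCcol : ∀ x (i j : Fin n), Ns ≤ (j:ℕ) → C x i j = 0 := by
    intro x i j hj
    rw [hCA x]
    simp only [Matrix.mul_apply]
    exact Finset.sum_eq_zero fun k _ => by rw [hAcol x k j hj, mul_zero]
  have hAAt : ∀ x y, A y * (A x)ᴴ = V y * K * Kᴴ * (V x)ᴴ := by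
    intro x y
    show (V y * K) * (V x * K)ᴴ = _
    rw [Matrix.conjTranspose_mul]
    simp only [← Matrix.mul_assoc]
  have htr : ∀ x y, (C y * (C x)ᴴ).trace = (V y * K * Kᴴ * (V x)ᴴ).trace := by
    intro x y
    rw [hCA x, hCA y, Matrix.conjTranspose_mul, Matrix.conjTranspose_conjTranspose]
    have h1 : (V x0)ᴴ * A y * ((A x)ᴴ * V x0) = (V x0)ᴴ * (A y * (A x)ᴴ * V x0) := by
      simp only [← Matrix.mul_assoc]
    rw [h1, Matrix.trace_mul_comm,
      Matrix.mul_assoc (A y * (A x)ᴴ) (V x0) ((V x0)ᴴ), hVstar' x0, Matrix.mul_one, hAAt x y]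
  have htrKK : (K * Kᴴ).trace = 1 := by
    have h2 : ∀ i : Fin n, (K * Kᴴ) i i = ((l i : ℂ))^2 := by
      intro i
      simp only [Matrix.mul_apply, Matrix.conjTranspose_apply, hK, Matrix.of_apply]
      rw [Finset.sum_eq_single i]
      · simp [sq]
      · intro k _ hk; simp [Ne.symm hk]
      · simp
    simp only [Matrix.trace, Matrix.diag]
    rw [Finset.sum_congr rfl (fun i _ => h2 i), show (1:ℂ) = ((1:ℝ):ℂ) by norm_num, ← hsum]
    push_cast
    ring
  have htrdiag : ∀ x, (C x * (C x)ᴴ).trace = 1 := by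
    intro x
    rw [htr x x]
    have h3 : V x * K * Kᴴ * (V x)ᴴ = V x * (K * Kᴴ * (V x)ᴴ) := by
      simp only [← Matrix.mul_assoc]
    rw [h3, Matrix.trace_mul_comm, Matrix.mul_assoc (K * Kᴴ) ((V x)ᴴ) (V x), hVstar x,
      Matrix.mul_one, htrKK]
  -- restrict traces to the Ns × Ns block
  have key : ∀ x y, (C y * (C x)ᴴ).trace =
      ∑ i : Fin Ns, ∑ j : Fin Ns,
        C y (Fin.castLE hNs i) (Fin.castLE hNs j) * star (C x (Fin.castLE hNs i) (Fin.castLE hNs j)) := by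
    intro x y
    simp only [Matrix.trace, Matrix.diag, Matrix.mul_apply, Matrix.conjTranspose_apply]
    rw [sum_restrict_aux n Ns hNs _ (fun i hi => Finset.sum_eq_zero fun j _ => by
      rw [hCrow y i j hi, zero_mul])]
    exact Finset.sum_congr rfl fun i _ =>
      sum_restrict_aux n Ns hNs _ (fun j hj => by rw [hCcol y _ j hj, zero_mul])
  set f : Fin m → EuclideanSpace ℂ (Fin Ns × Fin Ns) :=
    fun x => WithLp.toLp 2 (fun p : Fin Ns × Fin Ns => C x (Fin.castLE hNs p.1) (Fin.castLE hNs p.2)) with hf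
  have hinner : ∀ x y, (inner ℂ (f x) (f y) : ℂ) = (C y * (C x)ᴴ).trace := by
    intro x y
    rw [key x y, PiLp.inner_apply]
    simp only [RCLike.inner_apply, hf, PiLp.toLp_apply]
    rw [Fintype.sum_prod_type]
    exact Finset.sum_congr rfl fun i _ => Finset.sum_congr rfl fun j _ => by
      rw [mul_comm, starRingEnd_apply]; exact mul_comm _ _
  have horthonormal : Orthonormal ℂ f := by
    rw [orthonormal_iff_ite]
    intro x y
    by_cases hxy : x = y
    · subst hxy; rw [hinner x x, htrdiag x, if_pos rfl]
    · rw [hinner x y, if_neg hxy, htr x y]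
      exact horth x y hxy
  have hli := horthonormal.linearIndependent
  have hcard := hli.fintype_card_le_finrank
  rw [finrank_euclideanSpace] at hcard
  simp only [Fintype.card_prod, Fintype.card_fin] at hcard
  rw [pow_two] at hm
  omega
end
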